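/- Let d ≥ 2 and 1 ≤ p < d, let λ : ℝ^d → ℝ be continuous and 2πℤ^d-periodic, and let T be a primitive integer p×d matrix. Set λ⁻ = min_{ℝ^d} λ and λ⁺ = max_{ℝ^d} λ. Then the minimum of λ over S_T (which is attained) equals λ⁻ if and only if there exists k₀ ∈ (−π,π]^d with λ(k₀) = λ⁻ and every component of T k₀ in 2πℤ; likewise the maximum of λ over S_T equals λ⁺ if and only if there exists k₀ ∈ (−π,π]^d with λ(k₀) = λ⁺ and every component of T k₀ in 2πℤ. -/

import Mathlib

open Matrix
open scoped Real BigOperators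

/-- Euclidean norm of a vector in `ℝ^n`. -/
noncomputable def euclNorm {n : ℕ} (x : Fin n → ℝ) : ℝ := Real.sqrt (∑ i, (x i)^2)

open scoped Classical in
/-- Smallest eigenvalue of a (Hermitian) real matrix. -/
noncomputable def matLamMin {n : ℕ} (A : Matrix (Fin n) (Fin n) ℝ) : ℝ :=
  if h : A.IsHermitian then ⨅ i, h.eigenvalues i else 0

/-- `τ(T)`: square root of the smallest eigenvalue of `T * Tᵀ`. -/
noncomputable def matTau {p d : ℕ} (T : Matrix (Fin p) (Fin d) ℝ) : ℝ :=
  Real.sqrt (matLamMin (T * Tᵀ))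

open scoped Classical in
/-- `A^{-1/2}`: the inverse of the positive (semi)definite square root of `A`. -/
noncomputable def matInvSqrt {n : ℕ} (A : Matrix (Fin n) (Fin n) ℝ) : Matrix (Fin n) (Fin n) ℝ :=
  if h : A.PosSemidef then ((h.1.eigenvectorUnitary : Matrix (Fin n) (Fin n) ℝ) *
    diagonal (Real.sqrt ∘ h.1.eigenvalues) *
    (star (h.1.eigenvectorUnitary : Matrix (Fin n) (Fin n) ℝ)))⁻¹ else 0

/-- The representative of `x` in `(-π, π]` modulo `2πℤ`. -/
noncomputable def repPi (x : ℝ) : ℝ := x - 2*Real.pi*(⌈(x - Real.pi)/(2*Real.pi)⌉ : ℤ)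

/-!
Since `T` has integer entries, `S_T` is invariant under `2πℤ^d`, and so is `λ`; reducing each
coordinate into `(-π, π]` shows that `λ(S_T) = λ(S_T ∩ (-π, π]^d)`. As `S_T` is closed, this set of
values is also the image of the compact set `S_T ∩ [-π, π]^d`, so it is compact and its extrema are
attained. The minimum over `S_T` is then `λ⁻` exactly when `λ⁻` itself is a value of `λ` on
`S_T ∩ (-π, π]^d`, and likewise for the maximum.
-/

open Set

lemma repPi_mem_Ioc (x : ℝ) : repPi x ∈ Ioc (-π) π := by
  set c : ℤ := ⌈(x - π) / (2 * π)⌉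
  have hc_ge : (x - π) / (2 * π) ≤ c := Int.le_ceil _
  have hc_lt : (c : ℝ) < (x - π) / (2 * π) + 1 := Int.ceil_lt_add_one _
  rw [div_le_iff₀ Real.two_pi_pos] at hc_ge
  rw [← sub_lt_iff_lt_add, lt_div_iff₀ Real.two_pi_pos] at hc_lt
  unfold repPi
  constructor <;> linarith

lemma repPi_eq_add_two_pi_mul_int (x : ℝ) :
    repPi x = x + 2 * π * ((-⌈(x - π) / (2 * π)⌉ : ℤ) : ℝ) := by
  unfold repPi
  push_cast
  ring

lemma isClosed_setOf_eq_two_pi_mul_int : IsClosed {x : ℝ | ∃ z : ℤ, x = 2 * π * z} := by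
  convert (isClosed_singleton (x := (1 : ℝ))).preimage Real.continuous_cos using 1
  ext x
  simp only [mem_ofPred_eq, mem_preimage, mem_singleton_iff, Real.cos_eq_one_iff]
  exact exists_congr fun z => by rw [eq_comm, mul_comm]

section ChiralSet

variable {m n : Type*} [Fintype n]

-- The paper's `S_T`.
def chiralSet (T : Matrix m n ℤ) : Set (n → ℝ) :=
  {k | ∀ i, ∃ z : ℤ, (T.map (Int.cast : ℤ → ℝ) *ᵥ k) i = 2 * π * z}

lemma zero_mem_chiralSet (T : Matrix m n ℤ) : 0 ∈ chiralSet T :=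
  fun _ => ⟨0, by simp⟩

lemma isClosed_chiralSet (T : Matrix m n ℤ) : IsClosed (chiralSet T) := by
  simp only [chiralSet, ofPred_forall]
  exact isClosed_iInter fun i => isClosed_setOf_eq_two_pi_mul_int.preimage (by fun_prop)

lemma add_two_pi_mul_int_mem_chiralSet {T : Matrix m n ℤ} {k : n → ℝ} (hk : k ∈ chiralSet T)
    (v : n → ℤ) : k + (fun j => 2 * π * (v j : ℝ)) ∈ chiralSet T := by
  intro i
  obtain ⟨z, hz⟩ := hk i
  refine ⟨z + (T *ᵥ v) i, ?_⟩
  rw [mulVec_add, Pi.add_apply, hz]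
  simp only [mulVec, dotProduct, map_apply]
  push_cast
  rw [mul_add, Finset.mul_sum]
  congr 1
  exact Finset.sum_congr rfl fun j _ => by ring

variable {β : Type*} {lam : (n → ℝ) → β}

lemma image_chiralSet_eq_image_inter_cube
    (hper : ∀ (k : n → ℝ) (v : n → ℤ), lam (k + fun i => 2 * π * (v i : ℝ)) = lam k)
    (T : Matrix m n ℤ) :
    lam '' chiralSet T = lam '' (chiralSet T ∩ univ.pi fun _ => Ioc (-π) π) := by
  refine (image_mono inter_subset_left).antisymm' ?_
  rintro _ ⟨k, hk, rfl⟩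
  set v : n → ℤ := fun i => -⌈(k i - π) / (2 * π)⌉
  have hrep : k + (fun i => 2 * π * (v i : ℝ)) = fun i => repPi (k i) := by
    ext i
    simp only [Pi.add_apply, v, repPi_eq_add_two_pi_mul_int]
  refine ⟨_, ⟨add_two_pi_mul_int_mem_chiralSet hk v, fun i _ => ?_⟩, hper k v⟩
  rw [hrep]
  exact repPi_mem_Ioc (k i)

lemma mem_image_chiralSet_iff
    (hper : ∀ (k : n → ℝ) (v : n → ℤ), lam (k + fun i => 2 * π * (v i : ℝ)) = lam k)
    (T : Matrix m n ℤ) (b : β) :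
    b ∈ lam '' chiralSet T ↔
      ∃ k₀, (∀ i, k₀ i ∈ Ioc (-π) π) ∧ lam k₀ = b ∧ k₀ ∈ chiralSet T := by
  rw [image_chiralSet_eq_image_inter_cube hper, mem_image]
  simp only [mem_inter_iff, mem_univ_pi]
  exact exists_congr fun k => by tauto

variable [TopologicalSpace β]

lemma isCompact_image_chiralSet (hcont : Continuous lam)
    (hper : ∀ (k : n → ℝ) (v : n → ℤ), lam (k + fun i => 2 * π * (v i : ℝ)) = lam k)
    (T : Matrix m n ℤ) : IsCompact (lam '' chiralSet T) := by
  have hcube : IsCompact (chiralSet T ∩ univ.pi fun _ => Icc (-π) π) :=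
    (isCompact_univ_pi fun _ => isCompact_Icc).inter_left (isClosed_chiralSet T)
  convert hcube.image hcont using 1
  refine subset_antisymm ?_ (image_mono inter_subset_left)
  rw [image_chiralSet_eq_image_inter_cube hper]
  exact image_mono (inter_subset_inter_right _ (pi_mono fun _ _ => Ioc_subset_Icc_self))

end ChiralSet

section Extremum

variable {α : Type*} [ConditionallyCompleteLattice α] {s : Set α} {a b : α}

lemma IsLeast.csInf_eq_iff (ha : IsLeast s a) (hb : b ∈ lowerBounds s) : sInf s = b ↔ b ∈ s := by
  rw [ha.csInf_eq]
  exact ⟨fun hab => hab ▸ ha.1, fun hbs => le_antisymm (ha.2 hbs) (hb ha.1)⟩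

lemma IsGreatest.csSup_eq_iff (ha : IsGreatest s a) (hb : b ∈ upperBounds s) :
    sSup s = b ↔ b ∈ s :=
  IsLeast.csInf_eq_iff (α := αᵒᵈ) ha hb

end Extremum

theorem stmt_4_general (d p : ℕ)
    (lam : (Fin d → ℝ) → ℝ) (hcont : Continuous lam)
    (hper : ∀ (k : Fin d → ℝ) (n : Fin d → ℤ), lam (k + fun i => 2*π*(n i : ℝ)) = lam k)
    (lamlo lamhi : ℝ)
    (hlo : IsLeast (Set.range lam) lamlo) (hhi : IsGreatest (Set.range lam) lamhi)
    (T : Matrix (Fin p) (Fin d) ℤ) :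
    (∃ k ∈ {k : Fin d → ℝ | ∀ i, ∃ n : ℤ, (T.map (Int.cast : ℤ → ℝ) *ᵥ k) i = 2*π*n},
      ∀ k' ∈ {k : Fin d → ℝ | ∀ i, ∃ n : ℤ, (T.map (Int.cast : ℤ → ℝ) *ᵥ k) i = 2*π*n},
        lam k ≤ lam k') ∧
    (∃ k ∈ {k : Fin d → ℝ | ∀ i, ∃ n : ℤ, (T.map (Int.cast : ℤ → ℝ) *ᵥ k) i = 2*π*n},
      ∀ k' ∈ {k : Fin d → ℝ | ∀ i, ∃ n : ℤ, (T.map (Int.cast : ℤ → ℝ) *ᵥ k) i = 2*π*n},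
        lam k' ≤ lam k) ∧
    (sInf (lam '' {k | ∀ i, ∃ n : ℤ, (T.map (Int.cast : ℤ → ℝ) *ᵥ k) i = 2*π*n}) = lamlo ↔
      ∃ k₀ : Fin d → ℝ, (∀ i, k₀ i ∈ Set.Ioc (-π) π) ∧ lam k₀ = lamlo ∧
        ∀ i, ∃ n : ℤ, (T.map (Int.cast : ℤ → ℝ) *ᵥ k₀) i = 2*π*n) ∧
    (sSup (lam '' {k | ∀ i, ∃ n : ℤ, (T.map (Int.cast : ℤ → ℝ) *ᵥ k) i = 2*π*n}) = lamhi ↔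
      ∃ k₀ : Fin d → ℝ, (∀ i, k₀ i ∈ Set.Ioc (-π) π) ∧ lam k₀ = lamhi ∧
        ∀ i, ∃ n : ℤ, (T.map (Int.cast : ℤ → ℝ) *ᵥ k₀) i = 2*π*n) := by
  change (∃ k ∈ chiralSet T, _) ∧ (∃ k ∈ chiralSet T, _) ∧
    (sInf (lam '' chiralSet T) = lamlo ↔ _) ∧ (sSup (lam '' chiralSet T) = lamhi ↔ _)
  have hcpt := isCompact_image_chiralSet hcont hper T
  have hne : (lam '' chiralSet T).Nonempty := ⟨_, 0, zero_mem_chiralSet T, rfl⟩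
  obtain ⟨_, hmin⟩ := hcpt.exists_isLeast hne
  obtain ⟨_, hmax⟩ := hcpt.exists_isGreatest hne
  obtain ⟨kmin, hkmin, rfl⟩ := hmin.1
  obtain ⟨kmax, hkmax, rfl⟩ := hmax.1
  have hlo' := lowerBounds_mono_set (image_subset_range lam (chiralSet T)) hlo.2
  have hhi' := upperBounds_mono_set (image_subset_range lam (chiralSet T)) hhi.2
  exact ⟨⟨kmin, hkmin, fun k hk => hmin.2 (mem_image_of_mem lam hk)⟩,
    ⟨kmax, hkmax, fun k hk => hmax.2 (mem_image_of_mem lam hk)⟩,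
    (hmin.csInf_eq_iff hlo').trans (mem_image_chiralSet_iff hper T lamlo),
    (hmax.csSup_eq_iff hhi').trans (mem_image_chiralSet_iff hper T lamhi)⟩

/-- the (attained) minimum of `λ` over `S_T` equals the global minimum `λ⁻`
iff `T k₀ ∈ 2πℤ^p` for some minimizer `k₀ ∈ (−π,π]^d`; likewise for the maximum. -/
theorem stmt_4 (d p : ℕ) (hd : 2 ≤ d) (hp : 1 ≤ p) (hpd : p < d)
    (lam : (Fin d → ℝ) → ℝ) (hcont : Continuous lam)
    (hper : ∀ (k : Fin d → ℝ) (n : Fin d → ℤ), lam (k + fun i => 2*π*(n i : ℝ)) = lam k)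
    (lamlo lamhi : ℝ)
    (hlo : IsLeast (Set.range lam) lamlo) (hhi : IsGreatest (Set.range lam) lamhi)
    (T : Matrix (Fin p) (Fin d) ℤ)
    (hprim : ∃ S : Matrix (Fin d) (Fin p) ℤ, T * S = 1) :
    (∃ k ∈ {k : Fin d → ℝ | ∀ i, ∃ n : ℤ, (T.map (Int.cast : ℤ → ℝ) *ᵥ k) i = 2*π*n},
      ∀ k' ∈ {k : Fin d → ℝ | ∀ i, ∃ n : ℤ, (T.map (Int.cast : ℤ → ℝ) *ᵥ k) i = 2*π*n},
        lam k ≤ lam k') ∧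
    (∃ k ∈ {k : Fin d → ℝ | ∀ i, ∃ n : ℤ, (T.map (Int.cast : ℤ → ℝ) *ᵥ k) i = 2*π*n},
      ∀ k' ∈ {k : Fin d → ℝ | ∀ i, ∃ n : ℤ, (T.map (Int.cast : ℤ → ℝ) *ᵥ k) i = 2*π*n},
        lam k' ≤ lam k) ∧
    (sInf (lam '' {k | ∀ i, ∃ n : ℤ, (T.map (Int.cast : ℤ → ℝ) *ᵥ k) i = 2*π*n}) = lamlo ↔
      ∃ k₀ : Fin d → ℝ, (∀ i, k₀ i ∈ Set.Ioc (-π) π) ∧ lam k₀ = lamlo ∧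
        ∀ i, ∃ n : ℤ, (T.map (Int.cast : ℤ → ℝ) *ᵥ k₀) i = 2*π*n) ∧
    (sSup (lam '' {k | ∀ i, ∃ n : ℤ, (T.map (Int.cast : ℤ → ℝ) *ᵥ k) i = 2*π*n}) = lamhi ↔
      ∃ k₀ : Fin d → ℝ, (∀ i, k₀ i ∈ Set.Ioc (-π) π) ∧ lam k₀ = lamhi ∧
        ∀ i, ∃ n : ℤ, (T.map (Int.cast : ℤ → ℝ) *ᵥ k₀) i = 2*π*n) :=
  stmt_4_general d p lam hcont hper lamlo lamhi hlo hhi T
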